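/- arXiv:1407.1919 — 2 statements merged into one kernel-verified Lean document; each statement's English description precedes it below -/
import Mathlib

section
/- For every natural number r, the number of 4×4 matrices with nonnegative integer entries, all diagonal entries zero, and every row sum and every column sum equal to r, satisfies 30·S_4(r) = (r+1)(r+2)(2r+3)(r²+3r+5). -/
open Finset

/-- box -/
private def bx (n : ℕ) : Finset ℕ := range (n+1)

private def D2 (n : ℕ) : Finset (ℕ × ℕ) := (bx n ×ˢ bx n).filter fun x => x.1 + x.2 = n
private def D3 (n : ℕ) : Finset (ℕ × ℕ × ℕ) :=
  (bx n ×ˢ bx n ×ˢ bx n).filter fun x => x.1 + x.2.1 + x.2.2 = n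
private def D4 (n : ℕ) : Finset (ℕ × ℕ × ℕ × ℕ) :=
  (bx n ×ˢ bx n ×ˢ bx n ×ˢ bx n).filter fun x => x.1 + x.2.1 + x.2.2.1 + x.2.2.2 = n
private def D5 (n : ℕ) : Finset (ℕ × ℕ × ℕ × ℕ × ℕ) :=
  (bx n ×ˢ bx n ×ˢ bx n ×ˢ bx n ×ˢ bx n).filter
    fun x => x.1 + x.2.1 + x.2.2.1 + x.2.2.2.1 + x.2.2.2.2 = n
private def D6 (n : ℕ) : Finset (ℕ × ℕ × ℕ × ℕ × ℕ × ℕ) :=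
  (bx n ×ˢ bx n ×ˢ bx n ×ˢ bx n ×ˢ bx n ×ˢ bx n).filter
    fun x => x.1 + x.2.1 + x.2.2.1 + x.2.2.2.1 + x.2.2.2.2.1 + x.2.2.2.2.2 = n

/-- generalized hockey stick -/
private lemma hockey (a k : ℕ) (h : a ≤ k) (n : ℕ) :
    ∑ i ∈ range n, (i + a).choose k = (n + a).choose (k + 1) := by
  induction n with
  | zero => simp [Nat.choose_eq_zero_of_lt (by omega : a < k + 1)]
  | succ n ih =>
    rw [sum_range_succ, ih, show n + 1 + a = (n + a) + 1 by ring, Nat.choose_succ_succ (n + a) k]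
    simp only [Nat.succ_eq_add_one]
    omega

private lemma card_D2 (n : ℕ) : (D2 n).card = n + 1 := by
  rw [show n + 1 = (range (n+1)).card from (card_range _).symm]
  apply card_nbij' (i := fun x => x.1) (j := fun a => (a, n - a)) <;>
    simp [D2, bx, Prod.ext_iff, Set.MapsTo, Set.LeftInvOn, Set.RightInvOn] <;> omega

private lemma card_D3 (n : ℕ) : (D3 n).card = (n + 2).choose 2 := by
  rw [card_eq_sum_card_fiberwise (f := fun x => x.1) (t := range (n+1))
      (by intro x hx; simp [D3, bx] at hx ⊢; omega)]
  have h : ∀ i ∈ range (n+1),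
      ((D3 n).filter fun x => x.1 = i).card = (n - i + 1) := by
    intro i hi
    simp only [mem_range] at hi
    rw [← card_D2 (n - i)]
    apply card_nbij' (i := fun x => x.2) (j := fun y => (i, y)) <;>
      simp [D2, D3, bx, Prod.ext_iff, Set.MapsTo, Set.LeftInvOn, Set.RightInvOn] <;> omega
  rw [sum_congr rfl h]
  have := sum_range_reflect (fun j => (j + 1).choose 1) (n + 1)
  simp only [Nat.choose_one_right] at this ⊢
  calc ∑ i ∈ range (n+1), (n - i + 1) = ∑ i ∈ range (n+1), (i + 1) := by
        rw [← this]; apply sum_congr rfl; intro i hi; simp at hi; omega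
    _ = (n + 2).choose 2 := by
        have := hockey 1 1 le_rfl (n + 1)
        simpa [Nat.choose_one_right] using this

private lemma sum_reflect_choose (c n : ℕ) :
    ∑ i ∈ range (n+1), (n - i + c).choose c = (n + 1 + c).choose (c + 1) := by
  rw [← hockey c c le_rfl (n+1), ← sum_range_reflect (fun j => (j + c).choose c) (n + 1)]
  apply sum_congr rfl
  intro i hi
  simp only [mem_range] at hi
  congr 1

private lemma card_D4 (n : ℕ) : (D4 n).card = (n + 3).choose 3 := by
  rw [card_eq_sum_card_fiberwise (f := fun x => x.1) (t := range (n+1))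
      (by intro x hx; simp [D4, bx] at hx ⊢; omega)]
  have h : ∀ i ∈ range (n+1),
      ((D4 n).filter fun x => x.1 = i).card = (n - i + 2).choose 2 := by
    intro i hi
    simp only [mem_range] at hi
    rw [← card_D3 (n - i)]
    apply card_nbij' (i := fun x => x.2) (j := fun y => (i, y)) <;>
      simp [D3, D4, bx, Prod.ext_iff, Set.MapsTo, Set.LeftInvOn, Set.RightInvOn] <;> omega
  rw [sum_congr rfl h]
  simpa using sum_reflect_choose 2 n

private lemma card_D5 (n : ℕ) : (D5 n).card = (n + 4).choose 4 := by
  rw [card_eq_sum_card_fiberwise (f := fun x => x.1) (t := range (n+1))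
      (by intro x hx; simp [D5, bx] at hx ⊢; omega)]
  have h : ∀ i ∈ range (n+1),
      ((D5 n).filter fun x => x.1 = i).card = (n - i + 3).choose 3 := by
    intro i hi
    simp only [mem_range] at hi
    rw [← card_D4 (n - i)]
    apply card_nbij' (i := fun x => x.2) (j := fun y => (i, y)) <;>
      simp [D4, D5, bx, Prod.ext_iff, Set.MapsTo, Set.LeftInvOn, Set.RightInvOn] <;> omega
  rw [sum_congr rfl h]
  simpa using sum_reflect_choose 3 n

private lemma card_D6 (n : ℕ) : (D6 n).card = (n + 5).choose 5 := by
  rw [card_eq_sum_card_fiberwise (f := fun x => x.1) (t := range (n+1))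
      (by intro x hx; simp [D6, bx] at hx ⊢; omega)]
  have h : ∀ i ∈ range (n+1),
      ((D6 n).filter fun x => x.1 = i).card = (n - i + 4).choose 4 := by
    intro i hi
    simp only [mem_range] at hi
    rw [← card_D5 (n - i)]
    apply card_nbij' (i := fun x => x.2) (j := fun y => (i, y)) <;>
      simp [D5, D6, bx, Prod.ext_iff, Set.MapsTo, Set.LeftInvOn, Set.RightInvOn] <;> omega
  rw [sum_congr rfl h]
  simpa using sum_reflect_choose 4 n

private def rot (x : ℕ × ℕ × ℕ × ℕ × ℕ × ℕ) : ℕ × ℕ × ℕ × ℕ × ℕ × ℕ :=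
  (x.2.1, x.2.2.1, x.2.2.2.1, x.2.2.2.2.1, x.2.2.2.2.2, x.1)

private lemma card_filter_rot (n : ℕ) (p q : ℕ × ℕ × ℕ × ℕ × ℕ × ℕ → Prop)
    [DecidablePred p] [DecidablePred q] (hpq : ∀ x, p x ↔ q (rot x)) :
    ((D6 n).filter p).card = ((D6 n).filter q).card := by
  apply card_nbij' (i := rot)
    (j := fun y => (y.2.2.2.2.2, y.1, y.2.1, y.2.2.1, y.2.2.2.1, y.2.2.2.2.1))
  · intro x hx
    rw [mem_coe, mem_filter] at hx ⊢
    refine ⟨?_, (hpq x).1 hx.2⟩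
    have hb := hx.1
    simp only [D6, bx, mem_filter, mem_product, mem_range, rot] at hb ⊢
    omega
  · intro y hy
    rw [mem_coe, mem_filter] at hy ⊢
    refine ⟨?_, ?_⟩
    · have hb := hy.1
      simp only [D6, bx, mem_filter, mem_product, mem_range, rot] at hb ⊢
      omega
    · exact (hpq _).2 hy.2
  · intro x _; rfl
  · intro y _; rfl

private lemma card_B1 (r : ℕ) :
    ((D6 (2*r)).filter fun x => r + 1 ≤ x.1 + x.2.1).card
      = ∑ t ∈ range r, (2*r - t + 1) * ((t + 3).choose 3) := by
  rw [card_eq_sum_card_fiberwise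
      (f := fun x => x.2.2.1 + x.2.2.2.1 + x.2.2.2.2.1 + x.2.2.2.2.2) (t := range r)
      (by intro x hx; simp [D6, bx] at hx ⊢; omega)]
  apply sum_congr rfl
  intro t ht
  simp only [mem_range] at ht
  rw [← card_D2 (2*r - t), ← card_D4 t, ← card_product]
  apply card_nbij'
    (i := fun x => ((x.1, x.2.1), (x.2.2.1, x.2.2.2.1, x.2.2.2.2.1, x.2.2.2.2.2)))
    (j := fun y => (y.1.1, y.1.2, y.2.1, y.2.2.1, y.2.2.2.1, y.2.2.2.2))
  · intro x hx
    simp only [mem_coe, mem_filter, D6, D2, D4, bx, mem_product, mem_range] at hx ⊢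
    omega
  · intro y hy
    simp only [mem_coe, mem_filter, D6, D2, D4, bx, mem_product, mem_range] at hy ⊢
    omega
  · intro x _; rfl
  · intro y _; rfl

private lemma card_B1B2_fiber_lo (r m : ℕ) (hm : m ≤ r) :
    (((D6 (2*r)).filter fun x => r + 1 ≤ x.1 + x.2.1 ∧ r + 1 ≤ x.2.1 + x.2.2.1).filter
      fun x => x.2.1 = m).card = (m + 2).choose 4 := by
  rcases Nat.lt_or_ge m 2 with h2 | h2
  · rw [Nat.choose_eq_zero_of_lt (by omega), card_eq_zero, eq_empty_iff_forall_notMem]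
    intro x hx
    simp only [mem_filter, D6, bx, mem_product, mem_range] at hx
    omega
  · rw [show (m + 2).choose 4 = (m - 2 + 4).choose 4 by congr 1; omega, ← card_D5 (m - 2)]
    apply card_nbij'
      (i := fun x => (x.1 - (r+1-m), x.2.2.1 - (r+1-m), x.2.2.2.1, x.2.2.2.2.1, x.2.2.2.2.2))
      (j := fun y => (y.1 + (r+1-m), m, y.2.1 + (r+1-m), y.2.2.1, y.2.2.2.1, y.2.2.2.2))
    · rintro ⟨x1,x2,x3,x4,x5,x6⟩ hx
      simp only [mem_coe, mem_filter, D6, D5, bx, mem_product, mem_range] at hx ⊢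
      omega
    · rintro ⟨y1,y2,y3,y4,y5⟩ hy
      simp only [mem_coe, mem_filter, D6, D5, bx, mem_product, mem_range, and_true] at hy ⊢
      omega
    · rintro ⟨x1,x2,x3,x4,x5,x6⟩ hx
      simp only [mem_coe, mem_filter, D6, bx, mem_product, mem_range] at hx
      simp only [Prod.mk.injEq, and_true, true_and]
      omega
    · rintro ⟨y1,y2,y3,y4,y5⟩ hy
      simp only [mem_coe, mem_filter, D5, bx, mem_product, mem_range] at hy
      simp only [Prod.mk.injEq, and_true, true_and]
      omega

private lemma card_B1B2_fiber_hi (r m : ℕ) (hm1 : r + 1 ≤ m) (hm2 : m ≤ 2*r) :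
    (((D6 (2*r)).filter fun x => r + 1 ≤ x.1 + x.2.1 ∧ r + 1 ≤ x.2.1 + x.2.2.1).filter
      fun x => x.2.1 = m).card = (2*r - m + 4).choose 4 := by
  rw [← card_D5 (2*r - m)]
  apply card_nbij' (i := fun x => (x.1, x.2.2)) (j := fun y => (y.1, m, y.2))
  · rintro ⟨x1,x2,x3,x4,x5,x6⟩ hx
    simp only [mem_coe, mem_filter, D6, D5, bx, mem_product, mem_range] at hx ⊢
    omega
  · rintro ⟨y1,y2,y3,y4,y5⟩ hy
    simp only [mem_coe, mem_filter, D6, D5, bx, mem_product, mem_range, and_true] at hy ⊢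
    omega
  · rintro ⟨x1,x2,x3,x4,x5,x6⟩ hx
    simp only [mem_coe, mem_filter, D6, bx, mem_product, mem_range] at hx
    simp only [Prod.mk.injEq, and_true, true_and]
    omega
  · rintro ⟨y1,y2,y3,y4,y5⟩ _; rfl

private lemma card_B1B2 (r : ℕ) :
    ((D6 (2*r)).filter fun x => r + 1 ≤ x.1 + x.2.1 ∧ r + 1 ≤ x.2.1 + x.2.2.1).card
      = (r + 3).choose 5 + (r + 4).choose 5 := by
  rw [card_eq_sum_card_fiberwise (f := fun x => x.2.1) (t := range (2*r+1))
      (by intro x hx; simp [D6, bx] at hx ⊢; omega)]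
  rw [range_eq_Ico, ← sum_Ico_consecutive _ (Nat.zero_le (r+1)) (by omega : r+1 ≤ 2*r+1)]
  congr 1
  · rw [← range_eq_Ico,
      sum_congr rfl (fun m hm => card_B1B2_fiber_lo r m (by simp at hm; omega))]
    have h := hockey 2 4 (by norm_num) (r+1)
    rw [show r + 1 + 2 = r + 3 by omega] at h
    exact h
  · rw [sum_congr rfl (fun m hm =>
      card_B1B2_fiber_hi r m (by simp [mem_Ico] at hm; omega) (by simp [mem_Ico] at hm; omega))]
    rw [← hockey 4 4 le_rfl r]
    apply sum_nbij' (i := fun m => 2*r - m) (j := fun t => 2*r - t) <;>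
      simp [mem_Ico] <;> omega

private lemma V1_closed (r : ℕ) :
    (∑ t ∈ range r, (2*r - t + 1) * ((t + 3).choose 3)) + 4 * ((r + 4).choose 5)
      = (2*r + 5) * ((r + 3).choose 4) := by
  rw [← hockey 4 4 le_rfl r, ← hockey 3 3 le_rfl r, mul_sum, mul_sum, ← sum_add_distrib]
  apply sum_congr rfl
  intro t ht
  simp only [mem_range] at ht
  have h := Nat.add_one_mul_choose_eq (t+3) 3
  norm_num at h
  rw [show (4:ℕ) * ((t+4).choose 4) = ((t+4).choose 4) * 4 from Nat.mul_comm _ _, ← h,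
    ← Nat.add_mul]
  congr 1
  omega


private lemma key (r : ℕ) :
    ((D6 (2*r)).filter fun x => x.1 + x.2.1 ≤ r ∧ x.2.1 + x.2.2.1 ≤ r ∧ x.2.2.1 + x.2.2.2.1 ≤ r ∧ x.2.2.2.1 + x.2.2.2.2.1 ≤ r ∧ x.2.2.2.2.1 + x.2.2.2.2.2 ≤ r ∧ x.2.2.2.2.2 + x.1 ≤ r).card
      + 6 * (∑ t ∈ range r, (2*r - t + 1) * ((t + 3).choose 3))
      = (2*r + 5).choose 5 + 6 * ((r + 3).choose 5 + (r + 4).choose 5) := by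
  classical
  have hb1 : ((D6 (2*r)).filter fun x => r + 1 ≤ x.1 + x.2.1).card = ∑ t ∈ range r, (2*r - t + 1) * ((t + 3).choose 3) := card_B1 r
  have hb2 : ((D6 (2*r)).filter fun x => r + 1 ≤ x.2.1 + x.2.2.1).card = ((D6 (2*r)).filter fun x => r + 1 ≤ x.1 + x.2.1).card :=
    card_filter_rot (2*r) _ _ (fun x => Iff.rfl)
  have hb3 : ((D6 (2*r)).filter fun x => r + 1 ≤ x.2.2.1 + x.2.2.2.1).card = ((D6 (2*r)).filter fun x => r + 1 ≤ x.2.1 + x.2.2.1).card :=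
    card_filter_rot (2*r) _ _ (fun x => Iff.rfl)
  have hb4 : ((D6 (2*r)).filter fun x => r + 1 ≤ x.2.2.2.1 + x.2.2.2.2.1).card = ((D6 (2*r)).filter fun x => r + 1 ≤ x.2.2.1 + x.2.2.2.1).card :=
    card_filter_rot (2*r) _ _ (fun x => Iff.rfl)
  have hb5 : ((D6 (2*r)).filter fun x => r + 1 ≤ x.2.2.2.2.1 + x.2.2.2.2.2).card = ((D6 (2*r)).filter fun x => r + 1 ≤ x.2.2.2.1 + x.2.2.2.2.1).card :=
    card_filter_rot (2*r) _ _ (fun x => Iff.rfl)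
  have hb6 : ((D6 (2*r)).filter fun x => r + 1 ≤ x.2.2.2.2.2 + x.1).card = ((D6 (2*r)).filter fun x => r + 1 ≤ x.2.2.2.2.1 + x.2.2.2.2.2).card :=
    card_filter_rot (2*r) _ _ (fun x => Iff.rfl)
  have ht1 : ((D6 (2*r)).filter fun x => r + 1 ≤ x.1 + x.2.1 ∧ r + 1 ≤ x.2.1 + x.2.2.1).card = (r + 3).choose 5 + (r + 4).choose 5 := card_B1B2 r
  have ht2 : ((D6 (2*r)).filter fun x => r + 1 ≤ x.2.1 + x.2.2.1 ∧ r + 1 ≤ x.2.2.1 + x.2.2.2.1).card = ((D6 (2*r)).filter fun x => r + 1 ≤ x.1 + x.2.1 ∧ r + 1 ≤ x.2.1 + x.2.2.1).card :=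
    card_filter_rot (2*r) _ _ (fun x => Iff.rfl)
  have ht3 : ((D6 (2*r)).filter fun x => r + 1 ≤ x.2.2.1 + x.2.2.2.1 ∧ r + 1 ≤ x.2.2.2.1 + x.2.2.2.2.1).card = ((D6 (2*r)).filter fun x => r + 1 ≤ x.2.1 + x.2.2.1 ∧ r + 1 ≤ x.2.2.1 + x.2.2.2.1).card :=
    card_filter_rot (2*r) _ _ (fun x => Iff.rfl)
  have ht4 : ((D6 (2*r)).filter fun x => r + 1 ≤ x.2.2.2.1 + x.2.2.2.2.1 ∧ r + 1 ≤ x.2.2.2.2.1 + x.2.2.2.2.2).card = ((D6 (2*r)).filter fun x => r + 1 ≤ x.2.2.1 + x.2.2.2.1 ∧ r + 1 ≤ x.2.2.2.1 + x.2.2.2.2.1).card :=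
    card_filter_rot (2*r) _ _ (fun x => Iff.rfl)
  have ht5 : ((D6 (2*r)).filter fun x => r + 1 ≤ x.2.2.2.2.1 + x.2.2.2.2.2 ∧ r + 1 ≤ x.2.2.2.2.2 + x.1).card = ((D6 (2*r)).filter fun x => r + 1 ≤ x.2.2.2.1 + x.2.2.2.2.1 ∧ r + 1 ≤ x.2.2.2.2.1 + x.2.2.2.2.2).card :=
    card_filter_rot (2*r) _ _ (fun x => Iff.rfl)
  have ht6 : ((D6 (2*r)).filter fun x => r + 1 ≤ x.2.2.2.2.2 + x.1 ∧ r + 1 ≤ x.1 + x.2.1).card = ((D6 (2*r)).filter fun x => r + 1 ≤ x.2.2.2.2.1 + x.2.2.2.2.2 ∧ r + 1 ≤ x.2.2.2.2.2 + x.1).card :=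
    card_filter_rot (2*r) _ _ (fun x => Iff.rfl)
  have hx1 : (((D6 (2*r)).filter fun x => r + 1 ≤ x.1 + x.2.1) ∩ ((D6 (2*r)).filter fun x => r + 1 ≤ x.2.2.2.2.2 + x.1)).card = ((D6 (2*r)).filter fun x => r + 1 ≤ x.2.2.2.2.2 + x.1 ∧ r + 1 ≤ x.1 + x.2.1).card := by
    rw [inter_comm, ← filter_and]
  have hs1 := card_sdiff_add_card_inter ((D6 (2*r)).filter fun x => r + 1 ≤ x.1 + x.2.1) ((D6 (2*r)).filter fun x => r + 1 ≤ x.2.2.2.2.2 + x.1)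
  have hx2 : (((D6 (2*r)).filter fun x => r + 1 ≤ x.2.1 + x.2.2.1) ∩ ((D6 (2*r)).filter fun x => r + 1 ≤ x.1 + x.2.1)).card = ((D6 (2*r)).filter fun x => r + 1 ≤ x.1 + x.2.1 ∧ r + 1 ≤ x.2.1 + x.2.2.1).card := by
    rw [inter_comm, ← filter_and]
  have hs2 := card_sdiff_add_card_inter ((D6 (2*r)).filter fun x => r + 1 ≤ x.2.1 + x.2.2.1) ((D6 (2*r)).filter fun x => r + 1 ≤ x.1 + x.2.1)
  have hx3 : (((D6 (2*r)).filter fun x => r + 1 ≤ x.2.2.1 + x.2.2.2.1) ∩ ((D6 (2*r)).filter fun x => r + 1 ≤ x.2.1 + x.2.2.1)).card = ((D6 (2*r)).filter fun x => r + 1 ≤ x.2.1 + x.2.2.1 ∧ r + 1 ≤ x.2.2.1 + x.2.2.2.1).card := by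
    rw [inter_comm, ← filter_and]
  have hs3 := card_sdiff_add_card_inter ((D6 (2*r)).filter fun x => r + 1 ≤ x.2.2.1 + x.2.2.2.1) ((D6 (2*r)).filter fun x => r + 1 ≤ x.2.1 + x.2.2.1)
  have hx4 : (((D6 (2*r)).filter fun x => r + 1 ≤ x.2.2.2.1 + x.2.2.2.2.1) ∩ ((D6 (2*r)).filter fun x => r + 1 ≤ x.2.2.1 + x.2.2.2.1)).card = ((D6 (2*r)).filter fun x => r + 1 ≤ x.2.2.1 + x.2.2.2.1 ∧ r + 1 ≤ x.2.2.2.1 + x.2.2.2.2.1).card := by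
    rw [inter_comm, ← filter_and]
  have hs4 := card_sdiff_add_card_inter ((D6 (2*r)).filter fun x => r + 1 ≤ x.2.2.2.1 + x.2.2.2.2.1) ((D6 (2*r)).filter fun x => r + 1 ≤ x.2.2.1 + x.2.2.2.1)
  have hx5 : (((D6 (2*r)).filter fun x => r + 1 ≤ x.2.2.2.2.1 + x.2.2.2.2.2) ∩ ((D6 (2*r)).filter fun x => r + 1 ≤ x.2.2.2.1 + x.2.2.2.2.1)).card = ((D6 (2*r)).filter fun x => r + 1 ≤ x.2.2.2.1 + x.2.2.2.2.1 ∧ r + 1 ≤ x.2.2.2.2.1 + x.2.2.2.2.2).card := by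
    rw [inter_comm, ← filter_and]
  have hs5 := card_sdiff_add_card_inter ((D6 (2*r)).filter fun x => r + 1 ≤ x.2.2.2.2.1 + x.2.2.2.2.2) ((D6 (2*r)).filter fun x => r + 1 ≤ x.2.2.2.1 + x.2.2.2.2.1)
  have hx6 : (((D6 (2*r)).filter fun x => r + 1 ≤ x.2.2.2.2.2 + x.1) ∩ ((D6 (2*r)).filter fun x => r + 1 ≤ x.2.2.2.2.1 + x.2.2.2.2.2)).card = ((D6 (2*r)).filter fun x => r + 1 ≤ x.2.2.2.2.1 + x.2.2.2.2.2 ∧ r + 1 ≤ x.2.2.2.2.2 + x.1).card := by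
    rw [inter_comm, ← filter_and]
  have hs6 := card_sdiff_add_card_inter ((D6 (2*r)).filter fun x => r + 1 ≤ x.2.2.2.2.2 + x.1) ((D6 (2*r)).filter fun x => r + 1 ≤ x.2.2.2.2.1 + x.2.2.2.2.2)
  have hbad : ((D6 (2*r)).filter fun x => ¬(x.1 + x.2.1 ≤ r ∧ x.2.1 + x.2.2.1 ≤ r ∧ x.2.2.1 + x.2.2.2.1 ≤ r ∧ x.2.2.2.1 + x.2.2.2.2.1 ≤ r ∧ x.2.2.2.2.1 + x.2.2.2.2.2 ≤ r ∧ x.2.2.2.2.2 + x.1 ≤ r)) =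
      (((D6 (2*r)).filter fun x => r + 1 ≤ x.1 + x.2.1) \ ((D6 (2*r)).filter fun x => r + 1 ≤ x.2.2.2.2.2 + x.1)) ∪ (((D6 (2*r)).filter fun x => r + 1 ≤ x.2.1 + x.2.2.1) \ ((D6 (2*r)).filter fun x => r + 1 ≤ x.1 + x.2.1)) ∪ (((D6 (2*r)).filter fun x => r + 1 ≤ x.2.2.1 + x.2.2.2.1) \ ((D6 (2*r)).filter fun x => r + 1 ≤ x.2.1 + x.2.2.1)) ∪ (((D6 (2*r)).filter fun x => r + 1 ≤ x.2.2.2.1 + x.2.2.2.2.1) \ ((D6 (2*r)).filter fun x => r + 1 ≤ x.2.2.1 + x.2.2.2.1)) ∪ (((D6 (2*r)).filter fun x => r + 1 ≤ x.2.2.2.2.1 + x.2.2.2.2.2) \ ((D6 (2*r)).filter fun x => r + 1 ≤ x.2.2.2.1 + x.2.2.2.2.1)) ∪ (((D6 (2*r)).filter fun x => r + 1 ≤ x.2.2.2.2.2 + x.1) \ ((D6 (2*r)).filter fun x => r + 1 ≤ x.2.2.2.2.1 + x.2.2.2.2.2)) := by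
    ext ⟨x1,x2,x3,x4,x5,x6⟩
    simp only [mem_filter, mem_union, mem_sdiff, D6, bx, mem_product, mem_range]
    omega
  have hd5 : Disjoint ((((D6 (2*r)).filter fun x => r + 1 ≤ x.1 + x.2.1) \ ((D6 (2*r)).filter fun x => r + 1 ≤ x.2.2.2.2.2 + x.1)) ∪ (((D6 (2*r)).filter fun x => r + 1 ≤ x.2.1 + x.2.2.1) \ ((D6 (2*r)).filter fun x => r + 1 ≤ x.1 + x.2.1)) ∪ (((D6 (2*r)).filter fun x => r + 1 ≤ x.2.2.1 + x.2.2.2.1) \ ((D6 (2*r)).filter fun x => r + 1 ≤ x.2.1 + x.2.2.1)) ∪ (((D6 (2*r)).filter fun x => r + 1 ≤ x.2.2.2.1 + x.2.2.2.2.1) \ ((D6 (2*r)).filter fun x => r + 1 ≤ x.2.2.1 + x.2.2.2.1)) ∪ (((D6 (2*r)).filter fun x => r + 1 ≤ x.2.2.2.2.1 + x.2.2.2.2.2) \ ((D6 (2*r)).filter fun x => r + 1 ≤ x.2.2.2.1 + x.2.2.2.2.1))) (((D6 (2*r)).filter fun x => r + 1 ≤ x.2.2.2.2.2 + x.1) \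 ((D6 (2*r)).filter fun x => r + 1 ≤ x.2.2.2.2.1 + x.2.2.2.2.2)) := by
    rw [disjoint_left]
    rintro ⟨x1,x2,x3,x4,x5,x6⟩ hx hy
    simp only [mem_filter, mem_union, mem_sdiff, D6, bx, mem_product, mem_range] at hx hy
    omega
  have hd4 : Disjoint ((((D6 (2*r)).filter fun x => r + 1 ≤ x.1 + x.2.1) \ ((D6 (2*r)).filter fun x => r + 1 ≤ x.2.2.2.2.2 + x.1)) ∪ (((D6 (2*r)).filter fun x => r + 1 ≤ x.2.1 + x.2.2.1) \ ((D6 (2*r)).filter fun x => r + 1 ≤ x.1 + x.2.1)) ∪ (((D6 (2*r)).filter fun x => r + 1 ≤ x.2.2.1 + x.2.2.2.1) \ ((D6 (2*r)).filter fun x => r + 1 ≤ x.2.1 + x.2.2.1)) ∪ (((D6 (2*r)).filter fun x => r + 1 ≤ x.2.2.2.1 + x.2.2.2.2.1) \ ((D6 (2*r)).filter fun x => r + 1 ≤ x.2.2.1 + x.2.2.2.1))) (((D6 (2*r)).filter fun x => r + 1 ≤ x.2.2.2.2.1 + x.2.2.2.2.2) \ ((D6 (2*r)).filter fun x => r + 1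 ≤ x.2.2.2.1 + x.2.2.2.2.1)) := by
    rw [disjoint_left]
    rintro ⟨x1,x2,x3,x4,x5,x6⟩ hx hy
    simp only [mem_filter, mem_union, mem_sdiff, D6, bx, mem_product, mem_range] at hx hy
    omega
  have hd3 : Disjoint ((((D6 (2*r)).filter fun x => r + 1 ≤ x.1 + x.2.1) \ ((D6 (2*r)).filter fun x => r + 1 ≤ x.2.2.2.2.2 + x.1)) ∪ (((D6 (2*r)).filter fun x => r + 1 ≤ x.2.1 + x.2.2.1) \ ((D6 (2*r)).filter fun x => r + 1 ≤ x.1 + x.2.1)) ∪ (((D6 (2*r)).filter fun x => r + 1 ≤ x.2.2.1 + x.2.2.2.1) \ ((D6 (2*r)).filter fun x => r + 1 ≤ x.2.1 + x.2.2.1))) (((D6 (2*r)).filter fun x => r + 1 ≤ x.2.2.2.1 + x.2.2.2.2.1) \ ((D6 (2*r)).filter fun x => r + 1 ≤ x.2.2.1 + x.2.2.2.1)) := by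
    rw [disjoint_left]
    rintro ⟨x1,x2,x3,x4,x5,x6⟩ hx hy
    simp only [mem_filter, mem_union, mem_sdiff, D6, bx, mem_product, mem_range] at hx hy
    omega
  have hd2 : Disjoint ((((D6 (2*r)).filter fun x => r + 1 ≤ x.1 + x.2.1) \ ((D6 (2*r)).filter fun x => r + 1 ≤ x.2.2.2.2.2 + x.1)) ∪ (((D6 (2*r)).filter fun x => r + 1 ≤ x.2.1 + x.2.2.1) \ ((D6 (2*r)).filter fun x => r + 1 ≤ x.1 + x.2.1))) (((D6 (2*r)).filter fun x => r + 1 ≤ x.2.2.1 + x.2.2.2.1) \ ((D6 (2*r)).filter fun x => r + 1 ≤ x.2.1 + x.2.2.1)) := by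
    rw [disjoint_left]
    rintro ⟨x1,x2,x3,x4,x5,x6⟩ hx hy
    simp only [mem_filter, mem_union, mem_sdiff, D6, bx, mem_product, mem_range] at hx hy
    omega
  have hd1 : Disjoint ((((D6 (2*r)).filter fun x => r + 1 ≤ x.1 + x.2.1) \ ((D6 (2*r)).filter fun x => r + 1 ≤ x.2.2.2.2.2 + x.1))) (((D6 (2*r)).filter fun x => r + 1 ≤ x.2.1 + x.2.2.1) \ ((D6 (2*r)).filter fun x => r + 1 ≤ x.1 + x.2.1)) := by
    rw [disjoint_left]
    rintro ⟨x1,x2,x3,x4,x5,x6⟩ hx hy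
    simp only [mem_filter, mem_union, mem_sdiff, D6, bx, mem_product, mem_range] at hx hy
    omega
  have hsw := card_filter_add_card_filter_not (s := D6 (2*r))
    (p := fun x => x.1 + x.2.1 ≤ r ∧ x.2.1 + x.2.2.1 ≤ r ∧ x.2.2.1 + x.2.2.2.1 ≤ r ∧ x.2.2.2.1 + x.2.2.2.2.1 ≤ r ∧ x.2.2.2.2.1 + x.2.2.2.2.2 ≤ r ∧ x.2.2.2.2.2 + x.1 ≤ r)
  rw [hbad, card_union_of_disjoint hd5, card_union_of_disjoint hd4,
    card_union_of_disjoint hd3, card_union_of_disjoint hd2, card_union_of_disjoint hd1,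
    card_D6 (2*r)] at hsw
  omega

private lemma p2c (n : ℕ) : 2 * ((n+2).choose 2) = (n+1)*(n+2) := by
  induction n with
  | zero => rfl
  | succ n ih =>
    have h : (n + 1 + 2).choose 2 = (n + 2).choose 1 + (n + 2).choose 2 :=
      Nat.choose_succ_succ' (n+2) 1
    rw [h, Nat.choose_one_right, Nat.mul_add, ih]
    ring

private lemma p3c (n : ℕ) : 6 * ((n+3).choose 3) = (n+1)*(n+2)*(n+3) := by
  induction n with
  | zero => rfl
  | succ n ih =>
    have h : (n + 1 + 3).choose 3 = (n + 3).choose 2 + (n + 3).choose 3 :=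
      Nat.choose_succ_succ' (n+3) 2
    have h2 : 2 * ((n+3).choose 2) = (n+2)*(n+3) := p2c (n+1)
    rw [h]
    zify at ih h2 ⊢
    linear_combination 3 * h2 + ih

private lemma p4c (n : ℕ) : 24 * ((n+4).choose 4) = (n+1)*(n+2)*(n+3)*(n+4) := by
  induction n with
  | zero => rfl
  | succ n ih =>
    have h : (n + 1 + 4).choose 4 = (n + 4).choose 3 + (n + 4).choose 4 :=
      Nat.choose_succ_succ' (n+4) 3
    have h2 : 6 * ((n+4).choose 3) = (n+2)*(n+3)*(n+4) := p3c (n+1)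
    rw [h]
    zify at ih h2 ⊢
    linear_combination 4 * h2 + ih

private lemma p5c (n : ℕ) : 120 * ((n+5).choose 5) = (n+1)*(n+2)*(n+3)*(n+4)*(n+5) := by
  induction n with
  | zero => rfl
  | succ n ih =>
    have h : (n + 1 + 5).choose 5 = (n + 5).choose 4 + (n + 5).choose 5 :=
      Nat.choose_succ_succ' (n+5) 4
    have h2 : 24 * ((n+5).choose 4) = (n+2)*(n+3)*(n+4)*(n+5) := p4c (n+1)
    rw [h]
    zify at ih h2 ⊢
    linear_combination 5 * h2 + ih

private lemma main_count (r : ℕ) :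
    30 * ((D6 (2*r)).filter fun x => x.1 + x.2.1 ≤ r ∧ x.2.1 + x.2.2.1 ≤ r ∧
        x.2.2.1 + x.2.2.2.1 ≤ r ∧ x.2.2.2.1 + x.2.2.2.2.1 ≤ r ∧
        x.2.2.2.2.1 + x.2.2.2.2.2 ≤ r ∧ x.2.2.2.2.2 + x.1 ≤ r).card
      = (r + 1) * (r + 2) * (2 * r + 3) * (r ^ 2 + 3 * r + 5) := by
  have hk := key r
  have hv := V1_closed r
  rcases Nat.lt_or_ge r 2 with hr | hr
  · interval_cases r
    · norm_num [Nat.choose] at hk ⊢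
      omega
    · rw [sum_range_one] at hk
      norm_num [Nat.choose] at hk ⊢
      omega
  · obtain ⟨s, rfl⟩ : ∃ s, r = s + 2 := ⟨r - 2, by omega⟩
    have h25 : 120 * ((2*(s+2)+5).choose 5)
        = (2*s+5)*(2*s+6)*(2*s+7)*(2*s+8)*(2*s+9) := p5c (2*s+4)
    have hq : 120 * ((s+2+3).choose 5) = (s+1)*(s+2)*(s+3)*(s+4)*(s+5) := p5c s
    have hp : 120 * ((s+2+4).choose 5) = (s+2)*(s+3)*(s+4)*(s+5)*(s+6) := p5c (s+1)
    have hc4 : 24 * ((s+2+3).choose 4) = (s+2)*(s+3)*(s+4)*(s+5) := p4c (s+1)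
    apply Nat.eq_of_mul_eq_mul_left (show 0 < 120 by norm_num)
    zify at hk hv h25 hq hp hc4 ⊢
    linear_combination 3600*hk - 21600*hv + 30*h25 + 180*hq + 900*hp - 900*(2*(s+2)+5)*hc4

/-- `S n r` is the number of `n × n` matrices with nonnegative integer entries,
all diagonal entries zero, and every row sum and every column sum equal to `r`. -/
noncomputable def S (n r : ℕ) : ℕ :=
  Nat.card {M : Matrix (Fin n) (Fin n) ℕ //
    (∀ i, M i i = 0) ∧ (∀ i, ∑ j, M i j = r) ∧ (∀ j, ∑ i, M i j = r)}


private def mat (r : ℕ) (x : ℕ × ℕ × ℕ × ℕ × ℕ × ℕ) : Matrix (Fin 4) (Fin 4) ℕ :=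
  !![0, x.1, x.2.1, r - x.1 - x.2.1;
     x.2.2.2.1, 0, x.2.2.1, r - x.2.2.2.1 - x.2.2.1;
     x.2.2.2.2.1, x.2.2.2.2.2, 0, r - x.2.2.2.2.1 - x.2.2.2.2.2;
     r - x.2.2.2.1 - x.2.2.2.2.1, r - x.1 - x.2.2.2.2.2, r - x.2.1 - x.2.2.1, 0]

private lemma mem_aux (r : ℕ) (M : Matrix (Fin 4) (Fin 4) ℕ)
    (h : (∀ i, M i i = 0) ∧ (∀ i, ∑ j, M i j = r) ∧ (∀ j, ∑ i, M i j = r)) :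
    ((M 0 1, M 0 2, M 1 2, M 1 0, M 2 0, M 2 1) : ℕ × ℕ × ℕ × ℕ × ℕ × ℕ) ∈
      (D6 (2*r)).filter (fun x => x.1 + x.2.1 ≤ r ∧ x.2.1 + x.2.2.1 ≤ r ∧
        x.2.2.1 + x.2.2.2.1 ≤ r ∧ x.2.2.2.1 + x.2.2.2.2.1 ≤ r ∧
        x.2.2.2.2.1 + x.2.2.2.2.2 ≤ r ∧ x.2.2.2.2.2 + x.1 ≤ r) := by
  obtain ⟨hd, hr, hc⟩ := h
  simp only [Fin.sum_univ_four] at hr hc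
  have d0 := hd 0; have d1 := hd 1; have d2 := hd 2; have d3 := hd 3
  have r0 := hr 0; have r1 := hr 1; have r2 := hr 2; have r3 := hr 3
  have c0 := hc 0; have c1 := hc 1; have c2 := hc 2; have c3 := hc 3
  simp only [mem_filter, D6, bx, mem_product, mem_range]
  omega

private lemma mat_mem (r : ℕ) (x : ℕ × ℕ × ℕ × ℕ × ℕ × ℕ)
    (hx : x ∈ (D6 (2*r)).filter (fun x => x.1 + x.2.1 ≤ r ∧ x.2.1 + x.2.2.1 ≤ r ∧
        x.2.2.1 + x.2.2.2.1 ≤ r ∧ x.2.2.2.1 + x.2.2.2.2.1 ≤ r ∧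
        x.2.2.2.2.1 + x.2.2.2.2.2 ≤ r ∧ x.2.2.2.2.2 + x.1 ≤ r)) :
    (∀ i, mat r x i i = 0) ∧ (∀ i, ∑ j, mat r x i j = r) ∧ (∀ j, ∑ i, mat r x i j = r) := by
  obtain ⟨x1,x2,x3,x4,x5,x6⟩ := x
  simp only [mem_filter, D6, bx, mem_product, mem_range] at hx
  refine ⟨?_, ?_, ?_⟩ <;> intro i <;> fin_cases i <;>
    simp [mat, Fin.sum_univ_four] <;> omega

private lemma S_eq (r : ℕ) :
    S 4 r = ((D6 (2*r)).filter (fun x => x.1 + x.2.1 ≤ r ∧ x.2.1 + x.2.2.1 ≤ r ∧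
        x.2.2.1 + x.2.2.2.1 ≤ r ∧ x.2.2.2.1 + x.2.2.2.2.1 ≤ r ∧
        x.2.2.2.2.1 + x.2.2.2.2.2 ≤ r ∧ x.2.2.2.2.2 + x.1 ≤ r)).card := by
  rw [← Nat.card_eq_finsetCard]
  apply Nat.card_congr
  refine
    { toFun := fun M => ⟨_, mem_aux r M.1 M.2⟩
      invFun := fun x => ⟨mat r x.1, mat_mem r x.1 x.2⟩
      left_inv := ?_
      right_inv := ?_ }
  · rintro ⟨M, hM⟩
    apply Subtype.ext
    obtain ⟨hd, hr, hc⟩ := hM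
    simp only [Fin.sum_univ_four] at hr hc
    have d0 := hd 0; have d1 := hd 1; have d2 := hd 2; have d3 := hd 3
    have r0 := hr 0; have r1 := hr 1; have r2 := hr 2; have r3 := hr 3
    have c0 := hc 0; have c1 := hc 1; have c2 := hc 2; have c3 := hc 3
    show mat r _ = M
    apply Matrix.ext
    intro i j
    fin_cases i <;> fin_cases j <;> simp [mat] <;> omega
  · rintro ⟨⟨x1,x2,x3,x4,x5,x6⟩, hx⟩
    apply Subtype.ext
    simp [mat]

theorem thirty_mul_S_four (r : ℕ) :
    30 * S 4 r = (r + 1) * (r + 2) * (2 * r + 3) * (r ^ 2 + 3 * r + 5) := by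
  rw [S_eq]
  exact main_count r
end

section
/- For every natural number r, S_3(r) = r + 1; that is, the number of 3×3 matrices with nonnegative integer entries, zero diagonal, and all row and column sums equal to r is r + 1. -/
theorem S_three (r : ℕ) : S 3 r = r + 1 := by
  have e : {M : Matrix (Fin 3) (Fin 3) ℕ //
      (∀ i, M i i = 0) ∧ (∀ i, ∑ j, M i j = r) ∧ (∀ j, ∑ i, M i j = r)} ≃ Fin (r + 1) := by
    refine ⟨fun M => ⟨M.1 0 1, ?_⟩, fun k => ⟨!![0, k, r - k; r - k, 0, k; k, r - k, 0], ?_⟩, ?_, ?_⟩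
    · obtain ⟨M, hd, hr, hc⟩ := M
      have := hr 0
      simp [Fin.sum_univ_three, hd 0] at this
      show M 0 1 < r + 1
      omega
    · have hk : (k : ℕ) ≤ r := by omega
      refine ⟨?_, ?_, ?_⟩ <;> intro i <;> fin_cases i <;>
        simp [Fin.sum_univ_three, Matrix.cons_val_zero, Matrix.cons_val_one] <;> omega
    · rintro ⟨M, hd, hr, hc⟩
      ext i j
      have h0 := hr 0; have h1 := hr 1; have h2 := hr 2
      have c0 := hc 0; have c1 := hc 1; have c2 := hc 2
      simp only [Fin.sum_univ_three, hd 0, hd 1, hd 2] at h0 h1 h2 c0 c1 c2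
      fin_cases i <;> fin_cases j <;>
        simp [hd 0, hd 1, hd 2] <;> omega
    · intro k
      ext
      simp
  rw [S, Nat.card_congr e, Nat.card_eq_fintype_card, Fintype.card_fin]
end
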